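/- arXiv:2208.03875 — 4 statements merged into one kernel-verified Lean document; each statement's English description precedes it below -/
import Mathlib

section
/- Assume in addition that the augmented vector field F : ℝ⁴ⁿ → ℝ⁴ⁿ, F(p,q,x,y) = (-K₁₂(p,q)(∇_q H(x,q) + Ω(q-y)), K₁₂(p,q)ᵀ(∇_p H(p,y) - Ω(p-x)), -K₁₂(x,y)(∇_y H(p,y) + Ω(y-q)), K₁₂(x,y)ᵀ(∇_x H(x,q) + Ω(x-p))) is Lipschitz continuous. Let (P,Q) : [0,T] → ℝⁿ × ℝⁿ solve the original system P' = -K₁₂(P,Q)∇_Q H(P,Q), Q' = K₁₂(P,Q)ᵀ∇_P H(P,Q), and let (p,q,x,y) : [0,T] → ℝ⁴ⁿ solve the augmented system with initial data p(0) = x(0) = P(0) and q(0) = y(0) = Q(0). Then p(t) = x(t) = P(t) and q(t) = y(t) = Q(t) for all t ∈ [0,T]. -/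
/-!
Since the restraint Ω(‖p-x‖²/2 + ‖q-y‖²/2) vanishes together with its gradient on the diagonal
{p = x, q = y}, the doubled trajectory (P, Q, P, Q) of a solution of the original system solves the
augmented system. It has the same initial value as (p, q, x, y), so the two coincide by uniqueness
of solutions of an ODE with Lipschitz right-hand side.
-/

open Matrix

/- Gradient of H(P,Q) with respect to the first block of variables. -/
noncomputable def gradFst (n : ℕ) (H : (Fin n → ℝ) × (Fin n → ℝ) → ℝ)
    (P Q : Fin n → ℝ) : Fin n → ℝ :=
  fun i => fderiv ℝ (fun p => H (p, Q)) P (Pi.single i 1)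

/- Gradient of H(P,Q) with respect to the second block of variables. -/
noncomputable def gradSnd (n : ℕ) (H : (Fin n → ℝ) × (Fin n → ℝ) → ℝ)
    (P Q : Fin n → ℝ) : Fin n → ℝ :=
  fun i => fderiv ℝ (fun q => H (P, q)) Q (Pi.single i 1)

open Set

theorem eqOn_Icc_of_hasDerivWithinAt_Icc {E : Type*} [NormedAddCommGroup E] [NormedSpace ℝ E]
    {v : E → E} {K : NNReal} (hv : LipschitzWith K v) {f g : ℝ → E} {a b : ℝ}
    (hf : ∀ t ∈ Icc a b, HasDerivWithinAt f (v (f t)) (Icc a b) t)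
    (hg : ∀ t ∈ Icc a b, HasDerivWithinAt g (v (g t)) (Icc a b) t)
    (ha : f a = g a) :
    EqOn f g (Icc a b) :=
  ODE_solution_unique (v := fun _ => v) (fun _ => hv)
    (fun t ht => (hf t ht).continuousWithinAt)
    (fun t ht => (hf t (Ico_subset_Icc_self ht)).mono_of_mem_nhdsWithin (Icc_mem_nhdsGE_of_mem ht))
    (fun t ht => (hg t ht).continuousWithinAt)
    (fun t ht => (hg t (Ico_subset_Icc_self ht)).mono_of_mem_nhdsWithin (Icc_mem_nhdsGE_of_mem ht))
    ha

-- `z = (p, q, x, y)`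
noncomputable def augmentedField (n : ℕ)
    (K12 : (Fin n → ℝ) × (Fin n → ℝ) → Matrix (Fin n) (Fin n) ℝ)
    (H : (Fin n → ℝ) × (Fin n → ℝ) → ℝ) (Ω : ℝ)
    (z : (Fin n → ℝ) × (Fin n → ℝ) × (Fin n → ℝ) × (Fin n → ℝ)) :
    (Fin n → ℝ) × (Fin n → ℝ) × (Fin n → ℝ) × (Fin n → ℝ) :=
  (-(K12 (z.1, z.2.1)).mulVec (gradSnd n H z.2.2.1 z.2.1 + Ω • (z.2.1 - z.2.2.2)),
   (K12 (z.1, z.2.1))ᵀ.mulVec (gradFst n H z.1 z.2.2.2 - Ω • (z.1 - z.2.2.1)),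
   -(K12 (z.2.2.1, z.2.2.2)).mulVec (gradSnd n H z.1 z.2.2.2 + Ω • (z.2.2.2 - z.2.1)),
   (K12 (z.2.2.1, z.2.2.2))ᵀ.mulVec (gradFst n H z.2.2.1 z.2.1 + Ω • (z.2.2.1 - z.1)))

theorem augmentedField_diagonal (n : ℕ)
    (K12 : (Fin n → ℝ) × (Fin n → ℝ) → Matrix (Fin n) (Fin n) ℝ)
    (H : (Fin n → ℝ) × (Fin n → ℝ) → ℝ) (Ω : ℝ) (P Q : Fin n → ℝ) :
    augmentedField n K12 H Ω (P, Q, P, Q) =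
      (-(K12 (P, Q)).mulVec (gradSnd n H P Q), (K12 (P, Q))ᵀ.mulVec (gradFst n H P Q),
       -(K12 (P, Q)).mulVec (gradSnd n H P Q), (K12 (P, Q))ᵀ.mulVec (gradFst n H P Q)) := by
  simp only [augmentedField, sub_self, smul_zero, add_zero, sub_zero]

theorem augmented_solution_eq_original_general
    (n : ℕ)
    (K12 : (Fin n → ℝ) × (Fin n → ℝ) → Matrix (Fin n) (Fin n) ℝ)
    (H : (Fin n → ℝ) × (Fin n → ℝ) → ℝ)
    (Ω : ℝ) (T : ℝ)
    -- the augmented vector field F is Lipschitz continuous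
    (hLip : ∃ L : NNReal, LipschitzWith L
      (fun z : (Fin n → ℝ) × (Fin n → ℝ) × (Fin n → ℝ) × (Fin n → ℝ) =>
        (-(K12 (z.1, z.2.1)).mulVec (gradSnd n H z.2.2.1 z.2.1 + Ω • (z.2.1 - z.2.2.2)),
         (K12 (z.1, z.2.1))ᵀ.mulVec (gradFst n H z.1 z.2.2.2 - Ω • (z.1 - z.2.2.1)),
         -(K12 (z.2.2.1, z.2.2.2)).mulVec (gradSnd n H z.1 z.2.2.2 + Ω • (z.2.2.2 - z.2.1)),
         (K12 (z.2.2.1, z.2.2.2))ᵀ.mulVec (gradFst n H z.2.2.1 z.2.1 + Ω • (z.2.2.1 - z.1)))))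
    -- (P,Q) solves the original system on [0,T]
    (P Q : ℝ → Fin n → ℝ)
    (hP : ∀ t ∈ Set.Icc 0 T, HasDerivWithinAt P
      (-(K12 (P t, Q t)).mulVec (gradSnd n H (P t) (Q t))) (Set.Icc 0 T) t)
    (hQ : ∀ t ∈ Set.Icc 0 T, HasDerivWithinAt Q
      ((K12 (P t, Q t))ᵀ.mulVec (gradFst n H (P t) (Q t))) (Set.Icc 0 T) t)
    -- (p,q,x,y) solves the augmented system on [0,T]
    (p q x y : ℝ → Fin n → ℝ)
    (hp : ∀ t ∈ Set.Icc 0 T, HasDerivWithinAt p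
      (-(K12 (p t, q t)).mulVec (gradSnd n H (x t) (q t) + Ω • (q t - y t))) (Set.Icc 0 T) t)
    (hq : ∀ t ∈ Set.Icc 0 T, HasDerivWithinAt q
      ((K12 (p t, q t))ᵀ.mulVec (gradFst n H (p t) (y t) - Ω • (p t - x t))) (Set.Icc 0 T) t)
    (hx : ∀ t ∈ Set.Icc 0 T, HasDerivWithinAt x
      (-(K12 (x t, y t)).mulVec (gradSnd n H (p t) (y t) + Ω • (y t - q t))) (Set.Icc 0 T) t)
    (hy : ∀ t ∈ Set.Icc 0 T, HasDerivWithinAt y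
      ((K12 (x t, y t))ᵀ.mulVec (gradFst n H (x t) (q t) + Ω • (x t - p t))) (Set.Icc 0 T) t)
    -- initial data
    (hp0 : p 0 = P 0) (hx0 : x 0 = P 0) (hq0 : q 0 = Q 0) (hy0 : y 0 = Q 0) :
    ∀ t ∈ Set.Icc 0 T, p t = P t ∧ x t = P t ∧ q t = Q t ∧ y t = Q t := by
  obtain ⟨L, hF⟩ := hLip
  have doubled_eq : EqOn (fun t => (p t, q t, x t, y t)) (fun t => (P t, Q t, P t, Q t))
      (Icc 0 T) := by
    refine eqOn_Icc_of_hasDerivWithinAt_Icc (v := augmentedField n K12 H Ω) hF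
      (fun t ht => (hp t ht).prodMk ((hq t ht).prodMk ((hx t ht).prodMk (hy t ht))))
      (fun t ht => ?_) (by rw [hp0, hq0, hx0, hy0])
    rw [augmentedField_diagonal]
    exact (hP t ht).prodMk ((hQ t ht).prodMk ((hP t ht).prodMk (hQ t ht)))
  intro t ht
  obtain ⟨hpP, hqQ, hxP, hyQ⟩ : p t = P t ∧ q t = Q t ∧ x t = P t ∧ y t = Q t := by
    simpa only [Prod.mk.injEq] using doubled_eq ht
  exact ⟨hpP, hxP, hqQ, hyQ⟩

/-- If the augmented vector field is Lipschitz, (P,Q) solves the original system on [0,T]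
and (p,q,x,y) solves the augmented system with initial data p(0) = x(0) = P(0),
q(0) = y(0) = Q(0), then p = x = P and q = y = Q on [0,T]. -/
theorem augmented_solution_eq_original
    (n : ℕ)
    (K12 : (Fin n → ℝ) × (Fin n → ℝ) → Matrix (Fin n) (Fin n) ℝ)
    (hK : Continuous K12)
    (H : (Fin n → ℝ) × (Fin n → ℝ) → ℝ) (hH : ContDiff ℝ 1 H)
    (Ω : ℝ) (T : ℝ) (hT : 0 ≤ T)
    -- the augmented vector field F is Lipschitz continuous
    (hLip : ∃ L : NNReal, LipschitzWith L
      (fun z : (Fin n → ℝ) × (Fin n → ℝ) × (Fin n → ℝ) × (Fin n → ℝ) =>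
        (-(K12 (z.1, z.2.1)).mulVec (gradSnd n H z.2.2.1 z.2.1 + Ω • (z.2.1 - z.2.2.2)),
         (K12 (z.1, z.2.1))ᵀ.mulVec (gradFst n H z.1 z.2.2.2 - Ω • (z.1 - z.2.2.1)),
         -(K12 (z.2.2.1, z.2.2.2)).mulVec (gradSnd n H z.1 z.2.2.2 + Ω • (z.2.2.2 - z.2.1)),
         (K12 (z.2.2.1, z.2.2.2))ᵀ.mulVec (gradFst n H z.2.2.1 z.2.1 + Ω • (z.2.2.1 - z.1)))))
    -- (P,Q) solves the original system on [0,T]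
    (P Q : ℝ → Fin n → ℝ)
    (hP : ∀ t ∈ Set.Icc 0 T, HasDerivWithinAt P
      (-(K12 (P t, Q t)).mulVec (gradSnd n H (P t) (Q t))) (Set.Icc 0 T) t)
    (hQ : ∀ t ∈ Set.Icc 0 T, HasDerivWithinAt Q
      ((K12 (P t, Q t))ᵀ.mulVec (gradFst n H (P t) (Q t))) (Set.Icc 0 T) t)
    -- (p,q,x,y) solves the augmented system on [0,T]
    (p q x y : ℝ → Fin n → ℝ)
    (hp : ∀ t ∈ Set.Icc 0 T, HasDerivWithinAt p
      (-(K12 (p t, q t)).mulVec (gradSnd n H (x t) (q t) + Ω • (q t - y t))) (Set.Icc 0 T) t)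
    (hq : ∀ t ∈ Set.Icc 0 T, HasDerivWithinAt q
      ((K12 (p t, q t))ᵀ.mulVec (gradFst n H (p t) (y t) - Ω • (p t - x t))) (Set.Icc 0 T) t)
    (hx : ∀ t ∈ Set.Icc 0 T, HasDerivWithinAt x
      (-(K12 (x t, y t)).mulVec (gradSnd n H (p t) (y t) + Ω • (y t - q t))) (Set.Icc 0 T) t)
    (hy : ∀ t ∈ Set.Icc 0 T, HasDerivWithinAt y
      ((K12 (x t, y t))ᵀ.mulVec (gradFst n H (x t) (q t) + Ω • (x t - p t))) (Set.Icc 0 T) t)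
    -- initial data
    (hp0 : p 0 = P 0) (hx0 : x 0 = P 0) (hq0 : q 0 = Q 0) (hy0 : y 0 = Q 0) :
    ∀ t ∈ Set.Icc 0 T, p t = P t ∧ x t = P t ∧ q t = Q t ∧ y t = Q t :=
  augmented_solution_eq_original_general n K12 H Ω T hLip P Q hP hQ p q x y hp hq hx hy hp0 hx0 hq0
    hy0
end

section
/- Let h > 0 and a, c, p₀ ∈ ℝ, and set b := √(1 + h²·a²). Define p(t) := (b/h) · tan(t·h·c·b + arctan(h·p₀/b)). Then p(0) = p₀, and for every t with t·h·c·b + arctan(h·p₀/b) ∈ (-π/2, π/2) one has p'(t) = c · (1 + h²·(a² + p(t)²)). -/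
open Real

/-! The function `(b/h) tan(ω t + φ)` solves the Riccati equation `p' = (ω / (b h)) (b² + h² p²)`,
because `tan' = 1 + tan²`. With `b = √(1 + h²a²)` and `ω = h c b` the right-hand side becomes
`c (1 + h² (a² + p²))`, and the phase `φ = arctan (h p₀ / b)` fixes the initial value. -/

theorem Real.hasDerivAt_tan_one_add_sq {x : ℝ} (hx : cos x ≠ 0) :
    HasDerivAt tan (1 + tan x ^ 2) x := by
  simpa [one_div, ← inv_one_add_tan_sq hx] using hasDerivAt_tan hx

theorem hasDerivAt_const_mul_tan_affine {k β ω φ t : ℝ} (hk : k ≠ 0) (hβ : β ≠ 0)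
    (hcos : cos (t * ω + φ) ≠ 0) :
    HasDerivAt (fun s ↦ β / k * tan (s * ω + φ))
      (ω / (β * k) * (β ^ 2 + k ^ 2 * (β / k * tan (t * ω + φ)) ^ 2)) t := by
  have hphase : HasDerivAt (fun s ↦ s * ω + φ) ω t := (hasDerivAt_mul_const ω).add_const φ
  refine (((hasDerivAt_tan_one_add_sq hcos).comp t hphase).const_mul (β / k)).congr_deriv ?_
  field_simp

/-- Closed-form exact solution of the Ablowitz–Ladik scalar subsystem
ṗ = c·(1 + h²(a² + p²)): with b := √(1 + h²a²), the function
p(t) := (b/h)·tan(t·h·c·b + arctan(h·p₀/b)) satisfies p(0) = p₀ and, wherever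
the tangent argument lies in (-π/2, π/2), p'(t) = c·(1 + h²(a² + p(t)²)). -/
theorem tan_flow_solves_ablowitz_ladik_ode
    (h a c p₀ : ℝ) (hh : 0 < h) :
    (fun t : ℝ => (Real.sqrt (1 + h ^ 2 * a ^ 2) / h) *
        tan (t * h * c * Real.sqrt (1 + h ^ 2 * a ^ 2)
          + arctan (h * p₀ / Real.sqrt (1 + h ^ 2 * a ^ 2)))) 0 = p₀ ∧
    ∀ t : ℝ,
      t * h * c * Real.sqrt (1 + h ^ 2 * a ^ 2)
          + arctan (h * p₀ / Real.sqrt (1 + h ^ 2 * a ^ 2)) ∈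
        Set.Ioo (-(π / 2)) (π / 2) →
      HasDerivAt (fun t : ℝ => (Real.sqrt (1 + h ^ 2 * a ^ 2) / h) *
          tan (t * h * c * Real.sqrt (1 + h ^ 2 * a ^ 2)
            + arctan (h * p₀ / Real.sqrt (1 + h ^ 2 * a ^ 2))))
        (c * (1 + h ^ 2 * (a ^ 2 +
          ((Real.sqrt (1 + h ^ 2 * a ^ 2) / h) *
            tan (t * h * c * Real.sqrt (1 + h ^ 2 * a ^ 2)
              + arctan (h * p₀ / Real.sqrt (1 + h ^ 2 * a ^ 2)))) ^ 2))) t := by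
  set b := √(1 + h ^ 2 * a ^ 2)
  have hb : 0 < b := sqrt_pos.mpr (by positivity)
  have hb_sq : b ^ 2 = 1 + h ^ 2 * a ^ 2 := sq_sqrt (by positivity)
  have hphase (s : ℝ) : s * h * c * b = s * (h * c * b) := by ring
  simp only [hphase]
  refine ⟨?_, fun t ht ↦ ?_⟩
  · simp only [zero_mul, zero_add, tan_arctan]
    field_simp
  · convert hasDerivAt_const_mul_tan_affine hh.ne' hb.ne' (cos_pos_of_mem_Ioo ht).ne' using 1
    field_simp
    linear_combination (-c) * hb_sq
end

section
/- Let d ≥ 1, Ω ∈ ℝ, and H : ℝᵈ → ℝ be differentiable. On (ℝᵈ)ᵈ with points (P₁,…,P_d), P_i = (p_{i1},…,p_{id}), define for each i ∈ {1,…,d} the mixed Hamiltonian H_i(P₁,…,P_d) := H(x₁,…,x_d) where x_j := p_{σ(i,j), j} and σ(i,j) ∈ {1,…,d} is the unique index congruent to d + j - i modulo d; define H_c := Σ_{1 ≤ i < j ≤ d} ‖P_i - P_j‖²/2 and H̄ := Σ_{i=1}^d H_i + Ω·H_c. Then for every P ∈ ℝᵈ, every copy index k ∈ {1,…,d}, and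 every coordinate j ∈ {1,…,d}, the partial derivative ∂H̄/∂p_{kj} evaluated at the diagonal point (P, P, …, P) equals ∂H/∂x_j(P); in particular the gradient of H̄ with respect to each copy, evaluated on the diagonal, equals ∇H(P). -/
open scoped BigOperators

/-- The i-th mixed Hamiltonian H_i(P₁,…,P_d) := H(x₁,…,x_d) where x_j := p_{σ(i,j),j}
and σ(i,j) is the unique index congruent to d + j - i modulo d (in 0-based indexing on
`Fin d` this is just j - i computed modulo d). -/
noncomputable def mixedHam (d : ℕ) (H : (Fin d → ℝ) → ℝ)
    (i : Fin d) (Z : Fin d → Fin d → ℝ) : ℝ :=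
  H (fun j => Z (j - i) j)

/-- The constraint H_c := Σ_{i<j} ‖P_i - P_j‖₂²/2 (Euclidean 2-norm). -/
noncomputable def constraintHam (d : ℕ) (Z : Fin d → Fin d → ℝ) : ℝ :=
  ∑ i : Fin d, ∑ j : Fin d,
    if i < j then (∑ l : Fin d, (Z i l - Z j l) ^ 2) / 2 else 0

/-- The augmented Hamiltonian H̄ := Σ_i H_i + Ω·H_c. -/
noncomputable def augHam (d : ℕ) (Ω : ℝ) (H : (Fin d → ℝ) → ℝ)
    (Z : Fin d → Fin d → ℝ) : ℝ :=
  (∑ i : Fin d, mixedHam d H i Z) + Ω * constraintHam d Z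

section ShiftedDiagonal

variable {𝕜 ι : Type*} [NontriviallyNormedField 𝕜] [AddGroup ι]

/-- The argument `(p_{j - i, j})_j` of the mixed Hamiltonian `H_i`, as a linear function of
the copies `Z = (P_k)_k`. -/
noncomputable def shiftedDiagonal (i : ι) : (ι → ι → 𝕜) →L[𝕜] (ι → 𝕜) :=
  ContinuousLinearMap.pi fun j =>
    (ContinuousLinearMap.proj (R := 𝕜) (φ := fun _ : ι => 𝕜) j).comp
      (ContinuousLinearMap.proj (R := 𝕜) (φ := fun _ : ι => ι → 𝕜) (j - i))

@[simp]
lemma shiftedDiagonal_apply (i : ι) (Z : ι → ι → 𝕜) (j : ι) :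
    shiftedDiagonal i Z j = Z (j - i) j := rfl

/-- Each coordinate of copy `k` is read by exactly one of the shifted diagonals. -/
lemma sum_shiftedDiagonal_single [Fintype ι] [DecidableEq ι] (k : ι) (w : ι → 𝕜) :
    ∑ i, shiftedDiagonal i (Pi.single k w) = w := by
  funext j
  have hsel : ∀ i, j - i = k ↔ i = -k + j := fun i => by
    rw [sub_eq_iff_eq_add, eq_neg_add_iff_add_eq, eq_comm]
  simp [Finset.sum_apply, Pi.single_apply, ite_apply, hsel]

end ShiftedDiagonal

lemma hasFDerivAt_mixedHam {d : ℕ} [NeZero d] {H : (Fin d → ℝ) → ℝ} {i : Fin d}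
    {Z : Fin d → Fin d → ℝ} (hH : DifferentiableAt ℝ H (shiftedDiagonal i Z)) :
    HasFDerivAt (mixedHam d H i)
      ((fderiv ℝ H (shiftedDiagonal i Z)).comp (shiftedDiagonal i)) Z :=
  hH.hasFDerivAt.comp Z (shiftedDiagonal (𝕜 := ℝ) i).hasFDerivAt

lemma constraintHam_nonneg (d : ℕ) (Z : Fin d → Fin d → ℝ) : 0 ≤ constraintHam d Z := by
  unfold constraintHam
  positivity

lemma constraintHam_const (d : ℕ) (P : Fin d → ℝ) : constraintHam d (fun _ => P) = 0 := by
  simp [constraintHam]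

lemma differentiable_constraintHam (d : ℕ) : Differentiable ℝ (constraintHam d) := by
  unfold constraintHam
  refine Differentiable.fun_sum fun i _ => Differentiable.fun_sum fun j _ => ?_
  split_ifs <;> fun_prop

/-- The constraint attains its minimum `0` on the diagonal. -/
lemma hasFDerivAt_constraintHam_const (d : ℕ) (P : Fin d → ℝ) :
    HasFDerivAt (constraintHam d) (0 : (Fin d → Fin d → ℝ) →L[ℝ] ℝ) (fun _ => P) := by
  have hmin : IsLocalMin (constraintHam d) (fun _ => P) :=
    Filter.Eventually.of_forall fun Z => by
      rw [constraintHam_const]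
      exact constraintHam_nonneg d Z
  have hdiff := (differentiable_constraintHam d (fun _ => P)).hasFDerivAt
  rwa [hmin.hasFDerivAt_eq_zero hdiff] at hdiff

lemma fderiv_augHam_const {d : ℕ} [NeZero d] (Ω : ℝ) {H : (Fin d → ℝ) → ℝ} {P : Fin d → ℝ}
    (hH : DifferentiableAt ℝ H P) :
    fderiv ℝ (augHam d Ω H) (fun _ => P) = ∑ i, (fderiv ℝ H P).comp (shiftedDiagonal i) := by
  have hsum := HasFDerivAt.fun_sum (u := Finset.univ) fun i _ =>
    hasFDerivAt_mixedHam (i := i) (Z := fun _ => P) hH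
  have h := hsum.add ((hasFDerivAt_constraintHam_const d P).const_mul Ω)
  rw [smul_zero, add_zero] at h
  exact h.fderiv

/-- At a diagonal point (P,…,P), every partial derivative ∂H̄/∂p_{kj} of the augmented
Hamiltonian equals the corresponding partial derivative ∂H/∂x_j(P); in particular the
gradient of H̄ with respect to each copy, evaluated on the diagonal, equals ∇H(P). -/
theorem augmented_hamiltonian_gradient_on_diagonal
    (d : ℕ) [NeZero d] (Ω : ℝ)
    (H : (Fin d → ℝ) → ℝ) (hH : Differentiable ℝ H) :
    ∀ P : Fin d → ℝ, ∀ k j : Fin d,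
      fderiv ℝ (augHam d Ω H) (fun _ => P) (Pi.single k (Pi.single j 1))
        = fderiv ℝ H P (Pi.single j 1) := by
  intro P k j
  rw [fderiv_augHam_const Ω (hH P), FunLike.coe_sum, Finset.sum_apply]
  simp only [ContinuousLinearMap.comp_apply]
  rw [← map_sum, sum_shiftedDiagonal_single]
end

section
/- Let Ω ∈ ℝ and let p₁₀, q₁₀, r₁₀, w₁₀ be nonzero reals and p₂₀, q₂₀, r₂₀, w₂₀ be reals with p₁₀·p₂₀, q₁₀·q₂₀, r₁₀·r₂₀, w₁₀·w₂₀ ∈ (-π/2, π/2). Define p₂(t) := (1/p₁₀)·arctan(Ω·(3p₁₀ - q₁₀ - r₁₀ - w₁₀)·p₁₀·t + tan(p₁₀·p₂₀)), q₂(t) := (1/q₁₀)·arctan(Ω·(q₁₀ - p₁₀)·q₁₀·t + tan(q₁₀·q₂₀)), r₂(t) := (1/r₁₀)·arctan(Ω·(r₁₀ - p₁₀)·r₁₀·t + tan(r₁₀·r₂₀)), w₂(t) := (1/w₁₀)·arctan(Ω·(w₁₀ - p₁₀)·w₁₀·t + tan(w₁₀·w₂₀)). Then for all t ∈ ℝ: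 p₂(0) = p₂₀, q₂(0) = q₂₀, r₂(0) = r₂₀, w₂(0) = w₂₀, and p₂'(t) = cos²(p₁₀·p₂(t))·Ω·(3p₁₀ - q₁₀ - r₁₀ - w₁₀), q₂'(t) = cos²(q₁₀·q₂(t))·Ω·(q₁₀ - p₁₀), r₂'(t) = cos²(r₁₀·r₂(t))·Ω·(r₁₀ - p₁₀), w₂'(t) = cos²(w₁₀·w₂(t))·Ω·(w₁₀ - p₁₀). -/
open Real

lemma aux_init (a x0 c : ℝ) (ha : a ≠ 0) (h : a * x0 ∈ Set.Ioo (-(π / 2)) (π / 2)) :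
    (1 / a) * arctan (c * a * 0 + tan (a * x0)) = x0 := by
  rw [mul_zero, zero_add, arctan_tan h.1 h.2]
  field_simp

lemma aux_deriv (a x0 c : ℝ) (ha : a ≠ 0) (t : ℝ) :
    HasDerivAt (fun t => (1 / a) * arctan (c * a * t + tan (a * x0)))
      ((cos (a * ((1 / a) * arctan (c * a * t + tan (a * x0))))) ^ 2 * c) t := by
  set u : ℝ := c * a * t + tan (a * x0) with hu
  have hlin : HasDerivAt (fun t : ℝ => c * a * t + tan (a * x0)) (c * a) t := by
    simpa using ((hasDerivAt_id t).const_mul (c * a)).add_const (tan (a * x0))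
  have h1 : HasDerivAt (fun t => (1 / a) * arctan (c * a * t + tan (a * x0)))
      ((1 / a) * ((1 / (1 + u ^ 2)) * (c * a))) t :=
    ((Real.hasDerivAt_arctan u).comp t hlin).const_mul (1 / a)
  convert h1 using 1
  have hau : a * ((1 / a) * arctan u) = arctan u := by field_simp
  rw [hau, Real.cos_arctan]
  have h2 : (0:ℝ) < 1 + u ^ 2 := by positivity
  rw [div_pow, one_pow, Real.sq_sqrt h2.le]
  field_simp

/-- Exact solution of the gyrocenter constraint subsystem with Hamiltonian
H₅ = Ω[(p₁-q₁)²/2 + (p₁-r₁)²/2 + (p₁-w₁)²/2]: the second components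
p₂, q₂, r₂, w₂ given by the explicit arctan formulas satisfy the initial
conditions at t = 0 and the ODEs
p₂' = cos²(p₁₀·p₂)·Ω·(3p₁₀ - q₁₀ - r₁₀ - w₁₀), q₂' = cos²(q₁₀·q₂)·Ω·(q₁₀ - p₁₀),
r₂' = cos²(r₁₀·r₂)·Ω·(r₁₀ - p₁₀), w₂' = cos²(w₁₀·w₂)·Ω·(w₁₀ - p₁₀). -/
theorem gyrocenter_constraint_subsystem_exact_solution
    (Ω p10 q10 r10 w10 p20 q20 r20 w20 : ℝ)
    (hp1 : p10 ≠ 0) (hq1 : q10 ≠ 0) (hr1 : r10 ≠ 0) (hw1 : w10 ≠ 0)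
    (hp2 : p10 * p20 ∈ Set.Ioo (-(π / 2)) (π / 2))
    (hq2 : q10 * q20 ∈ Set.Ioo (-(π / 2)) (π / 2))
    (hr2 : r10 * r20 ∈ Set.Ioo (-(π / 2)) (π / 2))
    (hw2 : w10 * w20 ∈ Set.Ioo (-(π / 2)) (π / 2)) :
    let p2 : ℝ → ℝ := fun t =>
      (1 / p10) * arctan (Ω * (3 * p10 - q10 - r10 - w10) * p10 * t + tan (p10 * p20))
    let q2 : ℝ → ℝ := fun t =>
      (1 / q10) * arctan (Ω * (q10 - p10) * q10 * t + tan (q10 * q20))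
    let r2 : ℝ → ℝ := fun t =>
      (1 / r10) * arctan (Ω * (r10 - p10) * r10 * t + tan (r10 * r20))
    let w2 : ℝ → ℝ := fun t =>
      (1 / w10) * arctan (Ω * (w10 - p10) * w10 * t + tan (w10 * w20))
    p2 0 = p20 ∧ q2 0 = q20 ∧ r2 0 = r20 ∧ w2 0 = w20 ∧
    (∀ t : ℝ, HasDerivAt p2
      ((cos (p10 * p2 t)) ^ 2 * (Ω * (3 * p10 - q10 - r10 - w10))) t) ∧
    (∀ t : ℝ, HasDerivAt q2 ((cos (q10 * q2 t)) ^ 2 * (Ω * (q10 - p10))) t) ∧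
    (∀ t : ℝ, HasDerivAt r2 ((cos (r10 * r2 t)) ^ 2 * (Ω * (r10 - p10))) t) ∧
    (∀ t : ℝ, HasDerivAt w2 ((cos (w10 * w2 t)) ^ 2 * (Ω * (w10 - p10))) t) := by
  refine ⟨aux_init _ _ _ hp1 hp2, aux_init _ _ _ hq1 hq2, aux_init _ _ _ hr1 hr2,
    aux_init _ _ _ hw1 hw2,
    fun t => aux_deriv p10 p20 (Ω * (3 * p10 - q10 - r10 - w10)) hp1 t,
    fun t => aux_deriv q10 q20 (Ω * (q10 - p10)) hq1 t,
    fun t => aux_deriv r10 r20 (Ω * (r10 - p10)) hr1 t,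
    fun t => aux_deriv w10 w20 (Ω * (w10 - p10)) hw1 t⟩
end
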